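/- arXiv:2307.07460 — 2 statements merged into one kernel-verified Lean document; each statement's English description precedes it below -/
import Mathlib

section
/- Every priority-downward-closed set of words over a finite priority alphabet is a regular language. -/
/-- The priority embedding underlying the priority order: `u = u₁…u_k`,
`v = v₁u₁v₂u₂…v_ku_k` where each `vᵢ` consists of letters of priority at most
that of `uᵢ`. -/
inductive PrioEmb {α : Type*} (prio : α → ℕ) : List α → List α → Prop
  | nil : PrioEmb prio [] []
  | cons (a : α) {u v : List α} (w : List α) (hw : ∀ b ∈ w, prio b ≤ prio a)
      (h : PrioEmb prio u v) : PrioEmb prio (a :: u) (w ++ a :: v)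

/-- The priority order: `u ⊑ v` iff `u = ε`, or `u = u₁…u_k` and
`v = v₁u₁…v_ku_k` with each `vᵢ` over letters of priority at most that of `uᵢ`. -/
def PrioLE {α : Type*} (prio : α → ℕ) (u v : List α) : Prop :=
  u = [] ∨ PrioEmb prio u v

/-!
The complement of such a set is upward closed for the priority embedding `PrioEmb`, and
`PrioEmb` is a well-quasi-order when there are finitely many letters. This is shown by induction
on the largest priority `p`: a word is cut before each of its letters of priority `p` into a
prefix and blocks of lower priority, and blocks are compared with Higman's lemma; skipped blocks,
and what is left over of a matched block, are absorbed in front of the next matched letter of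
priority `p`. So the complement is the upward closure of its finitely many minimal words. That
upward closure is regular by Myhill–Nerode: a left quotient by a letter of the upward closure of
a set of words is the upward closure of a set of words that are no longer.
-/

theorem Set.PartiallyWellOrderedOn.mono_rel {β : Type*} {s : Set β} {r r' : β → β → Prop}
    (h : s.PartiallyWellOrderedOn r) (hr : ∀ x y, r x y → r' x y) :
    s.PartiallyWellOrderedOn r' := fun f =>
  let ⟨m, n, hmn, hf⟩ := h f
  ⟨m, n, hmn, hr _ _ hf⟩

theorem WellQuasiOrdered.exists_finite_basis {β : Type*} {r : β → β → Prop}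
    [IsPartialOrder β r] (h : WellQuasiOrdered r) (M : Set β) :
    ∃ B ⊆ M, B.Finite ∧ ∀ v ∈ M, ∃ u ∈ B, r u v := by
  set B := {u | u ∈ M ∧ ∀ w ∈ M, r w u → w = u}
  have hB : IsAntichain r B := fun u hu _ hv hne huv => hne (hv.2 u hu.1 huv)
  refine ⟨B, fun u hu => hu.1, hB.finite_of_wellQuasiOrdered h, fun v hv => ?_⟩
  obtain ⟨u, ⟨huM, huv⟩, hmin⟩ :=
    h.wellFounded.has_min {w | w ∈ M ∧ r w v} ⟨v, hv, refl v⟩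
  refine ⟨u, ⟨huM, fun w hwM hwu => antisymm hwu ?_⟩, huv⟩
  by_contra hne
  exact hmin w ⟨hwM, _root_.trans hwu huv⟩ ⟨hwu, hne⟩

theorem Language.IsRegular.of_mem_of_leftQuotient_mem {α : Type*} {S : Set (Language α)}
    (hS : S.Finite) (hq : ∀ K ∈ S, ∀ c, K.leftQuotient [c] ∈ S) {L : Language α} (hL : L ∈ S) :
    L.IsRegular := by
  refine .of_finite_range_leftQuotient (hS.subset ?_)
  rintro _ ⟨x, rfl⟩
  induction x generalizing L with
  | nil => simpa
  | cons c x ih =>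
    rw [← List.singleton_append, Language.leftQuotient_append]
    exact ih (hq L hL c)

section

variable {α : Type*} {prio : α → ℕ}

namespace PrioEmb

variable {a c : α} {u v w u₁ u₂ v₁ v₂ y : List α}

protected theorem refl (prio : α → ℕ) : ∀ u : List α, PrioEmb prio u u
  | [] => .nil
  | a :: u => .cons a [] (by simp) (PrioEmb.refl prio u)

theorem append (h₁ : PrioEmb prio u₁ v₁) (h₂ : PrioEmb prio u₂ v₂) :
    PrioEmb prio (u₁ ++ u₂) (v₁ ++ v₂) := by
  induction h₁ with
  | nil => exact h₂
  | cons a w hw _ ih => simpa using PrioEmb.cons a w hw ih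

theorem append_left_of_prio_le (h : PrioEmb prio (a :: u) v) (hw : ∀ c ∈ w, prio c ≤ prio a) :
    PrioEmb prio (a :: u) (w ++ v) := by
  cases h with
  | cons _ w' hw' h =>
    simpa using PrioEmb.cons a (w ++ w') (List.forall_mem_append.2 ⟨hw, hw'⟩) h

theorem exists_split (h : PrioEmb prio (u₁ ++ u₂) v) :
    ∃ v₁ v₂, v = v₁ ++ v₂ ∧ PrioEmb prio u₁ v₁ ∧ PrioEmb prio u₂ v₂ := by
  induction u₁ generalizing v with
  | nil => exact ⟨[], v, rfl, .nil, h⟩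
  | cons a u₁ ih =>
    cases h with
    | cons _ w hw h =>
      obtain ⟨v₁, v₂, rfl, h₁, h₂⟩ := ih h
      exact ⟨w ++ a :: v₁, v₂, by simp, .cons a w hw h₁, h₂⟩

theorem forall_prio_le {n : ℕ} (h : PrioEmb prio u v) (hu : ∀ c ∈ u, prio c ≤ n) :
    ∀ c ∈ v, prio c ≤ n := by
  induction h with
  | nil => simp
  | cons a w hw _ ih =>
    simp only [List.forall_mem_cons] at hu
    simpa [or_imp, forall_and] using ⟨fun c hc => (hw c hc).trans hu.1, hu.1, ih hu.2⟩

theorem trans (h₁ : PrioEmb prio u v) (h₂ : PrioEmb prio v w) : PrioEmb prio u w := by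
  induction h₁ generalizing w with
  | nil => exact h₂
  | cons a j hj _ ih =>
    obtain ⟨w₁, w₂, rfl, hjw, hrest⟩ := exists_split h₂
    cases hrest with
    | cons _ j' hj' hrest =>
      simpa using PrioEmb.cons a (w₁ ++ j')
        (List.forall_mem_append.2 ⟨hjw.forall_prio_le hj, hj'⟩) (ih hrest)

theorem length_le (h : PrioEmb prio u v) : u.length ≤ v.length := by
  induction h with
  | nil => rfl
  | cons => simp; omega

theorem eq_of_length_le (h : PrioEmb prio u v) (hl : v.length ≤ u.length) : u = v := by
  induction h with
  | nil => rfl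
  | cons a w _ h ih =>
    have := h.length_le
    obtain rfl : w = [] := List.eq_nil_of_length_eq_zero (by simp at hl; omega)
    simp only [List.length_cons, List.nil_append] at hl ⊢
    rw [ih (by omega)]

theorem antisymm (h₁ : PrioEmb prio u v) (h₂ : PrioEmb prio v u) : u = v :=
  h₁.eq_of_length_le h₂.length_le

theorem cons_right_iff : PrioEmb prio u (c :: y) ↔
    (∃ u', u = c :: u' ∧ PrioEmb prio u' y) ∨
      (∃ a u', u = a :: u' ∧ prio c ≤ prio a) ∧ PrioEmb prio u y := by
  constructor
  · intro h
    generalize hv : c :: y = v at h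
    obtain _ | ⟨a, _ | ⟨b, w⟩, hw, h⟩ := h
    · simp at hv
    · simp only [List.nil_append, List.cons.injEq] at hv
      obtain ⟨rfl, rfl⟩ := hv
      exact .inl ⟨_, rfl, h⟩
    · simp only [List.cons_append, List.cons.injEq] at hv
      obtain ⟨rfl, rfl⟩ := hv
      simp only [List.forall_mem_cons] at hw
      exact .inr ⟨⟨a, _, rfl, hw.1⟩, .cons a w hw.2 h⟩
  · rintro (⟨u', rfl, h⟩ | ⟨⟨a, u', rfl, hc⟩, h⟩)
    · exact .cons c [] (by simp) h
    · exact h.append_left_of_prio_le (w := [c]) (by simpa using hc)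

end PrioEmb

instance : IsPartialOrder (List α) (PrioEmb prio) where
  refl := PrioEmb.refl prio
  trans _ _ _ := PrioEmb.trans
  antisymm _ _ := PrioEmb.antisymm

def PrioPrefEmb (prio : α → ℕ) (u v : List α) : Prop :=
  ∃ w, PrioEmb prio u w ∧ w <+: v

theorem PrioEmb.prioPrefEmb {u v : List α} (h : PrioEmb prio u v) : PrioPrefEmb prio u v :=
  ⟨v, h, List.prefix_refl v⟩

instance : IsPreorder (List α) (PrioPrefEmb prio) where
  refl u := (PrioEmb.refl prio u).prioPrefEmb
  trans := by
    rintro u v w ⟨v₁, huv, v₂, rfl⟩ ⟨w₁, hvw, w₂, rfl⟩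
    obtain ⟨x₁, x₂, rfl, hx₁, -⟩ := hvw.exists_split
    exact ⟨x₁, huv.trans hx₁, x₂ ++ w₂, by simp⟩

def PrioBlockLE (prio : α → ℕ) (q q' : α × List α) : Prop :=
  q.1 = q'.1 ∧ PrioPrefEmb prio q.2 q'.2

instance : IsPreorder (α × List α) (PrioBlockLE prio) where
  refl q := ⟨rfl, refl q.2⟩
  trans _ _ _ h h' := ⟨h.1.trans h'.1, _root_.trans h.2 h'.2⟩

def joinBlocks (m : List (α × List α)) : List α :=
  m.flatMap fun q => q.1 :: q.2

@[simp] theorem joinBlocks_nil : joinBlocks ([] : List (α × List α)) = [] := rfl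

@[simp] theorem joinBlocks_cons (q : α × List α) (m : List (α × List α)) :
    joinBlocks (q :: m) = q.1 :: (q.2 ++ joinBlocks m) := rfl

@[simp] theorem joinBlocks_append (m m' : List (α × List α)) :
    joinBlocks (m ++ m') = joinBlocks m ++ joinBlocks m' :=
  List.flatMap_append

theorem PrioPrefEmb.append_right {u v : List α} (h : PrioPrefEmb prio u v) (w : List α) :
    PrioPrefEmb prio u (v ++ w) :=
  let ⟨v₁, huv, hv⟩ := h
  ⟨v₁, huv, hv.trans (List.prefix_append v w)⟩

theorem PrioEmb.append_joinBlocks {p : ℕ} {z z' : List α} {m m' : List (α × List α)}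
    {q q' : α × List α} (hz : PrioPrefEmb prio z z')
    (hm : List.SublistForall₂ (PrioBlockLE prio) m m') (hq₁ : q.1 = q'.1)
    (hq₂ : PrioEmb prio q.2 q'.2) (hmp : ∀ r ∈ m, p ≤ prio r.1) (hqp : p ≤ prio q.1)
    (hjunk : ∀ c ∈ z' ++ joinBlocks m', prio c ≤ p) :
    PrioEmb prio (z ++ joinBlocks (m ++ [q])) (z' ++ joinBlocks (m' ++ [q'])) := by
  obtain ⟨a, y⟩ := q
  obtain ⟨a', y'⟩ := q'
  obtain rfl : a = a' := hq₁
  induction hm generalizing z z' with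
  | @nil l =>
    obtain ⟨w₁, hzw, w₂, rfl⟩ := hz
    have hlast := (PrioEmb.cons a [] (by simp) hq₂).append_left_of_prio_le
      (w := w₂ ++ joinBlocks l) fun c hc => (hjunk c (by simp_all)).trans hqp
    simpa using hzw.append hlast
  | @cons r r' m m' hr hm ih =>
    obtain ⟨w₁, hzw, w₂, rfl⟩ := hz
    have hinner := ih hr.2 (fun s hs => hmp s (by simp [hs]))
      fun c hc => hjunk c (by simp_all)
    have hblock := (PrioEmb.cons r.1 [] (by simp) hinner).append_left_of_prio_le (w := w₂)
      fun c hc => (hjunk c (by simp_all)).trans (hmp r (by simp))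
    simpa [hr.1] using hzw.append hblock
  | @cons_right r' m m' hm ih =>
    simpa using ih (hz.append_right (r'.1 :: r'.2)) hmp (by simpa using hjunk)

def prioBelow (prio : α → ℕ) (p : ℕ) : Set (List α) :=
  {v | ∀ c ∈ v, prio c < p}

def prioBlocks (prio : α → ℕ) (p : ℕ) : Set (α × List α) :=
  {a | prio a = p} ×ˢ prioBelow prio p

theorem exists_eq_append_joinBlocks {p : ℕ} {v : List α}
    (hv : v ∈ prioBelow prio (p + 1)) :
    ∃ z m, v = z ++ joinBlocks m ∧ z ∈ prioBelow prio p ∧ ∀ q ∈ m, q ∈ prioBlocks prio p := by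
  induction v with
  | nil => exact ⟨[], [], rfl, by simp [prioBelow], by simp⟩
  | cons c v ih =>
    obtain ⟨hc, hv⟩ := List.forall_mem_cons.1 hv
    obtain ⟨z, m, rfl, hz, hm⟩ := ih hv
    rcases (Nat.lt_succ_iff.1 hc).lt_or_eq with hc | hc
    · exact ⟨c :: z, m, rfl, List.forall_mem_cons.2 ⟨hc, hz⟩, hm⟩
    · refine ⟨[], (c, z) :: m, rfl, by simp [prioBelow], ?_⟩
      exact List.forall_mem_cons.2 ⟨⟨hc, hz⟩, hm⟩

/-- Codes of the words with a letter of priority `p` and none higher, cut before each letter of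
priority `p` into a part `z` before the first block, inner blocks `m` and a last block `q`. The
last block is kept apart because an embedding has to map it onto the last block, and there the
lower-priority part is compared by `PrioEmb` rather than `PrioPrefEmb`. -/
def blockCodes (prio : α → ℕ) (p : ℕ) :
    Set (List α × List (α × List α) × (α × List α)) :=
  prioBelow prio p ×ˢ ({m | ∀ q ∈ m, q ∈ prioBlocks prio p} ×ˢ prioBlocks prio p)

def decodeBlocks (x : List α × List (α × List α) × (α × List α)) : List α :=
  x.1 ++ joinBlocks (x.2.1 ++ [x.2.2])

theorem prioBelow_succ_subset (p : ℕ) :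
    prioBelow prio (p + 1) ⊆ prioBelow prio p ∪ decodeBlocks '' blockCodes prio p := by
  intro v hv
  obtain ⟨z, m, rfl, hz, hm⟩ := exists_eq_append_joinBlocks hv
  rcases m.eq_nil_or_concat' with rfl | ⟨m, q, rfl⟩
  · simpa using Or.inl hz
  · refine Or.inr ⟨(z, m, q), ⟨hz, fun r hr => hm r (by simp [hr]), hm q (by simp)⟩, rfl⟩

theorem prioEmb_decodeBlocks {p : ℕ} {x y : List α × List (α × List α) × (α × List α)}
    (hx : x ∈ blockCodes prio p) (hy : y ∈ blockCodes prio p)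
    (h : PrioPrefEmb prio x.1 y.1 ∧ List.SublistForall₂ (PrioBlockLE prio) x.2.1 y.2.1 ∧
      x.2.2.1 = y.2.2.1 ∧ PrioEmb prio x.2.2.2 y.2.2.2) :
    PrioEmb prio (decodeBlocks x) (decodeBlocks y) := by
  obtain ⟨-, hxm, hxq, -⟩ := hx
  obtain ⟨hyz, hym, -⟩ := hy
  refine PrioEmb.append_joinBlocks h.1 h.2.1 h.2.2.1 h.2.2.2 (fun r hr => (hxm r hr).1.ge)
    hxq.ge ?_
  rintro c hc
  rcases List.mem_append.1 hc with hc | hc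
  · exact (hyz c hc).le
  · obtain ⟨r, hr, hc⟩ := List.mem_flatMap.1 hc
    obtain ⟨hr₁, hr₂⟩ := hym r hr
    rcases List.mem_cons.1 hc with rfl | hc
    exacts [hr₁.le, (hr₂ c hc).le]

theorem partiallyWellOrderedOn_prioBelow [Finite α] (prio : α → ℕ) (p : ℕ) :
    (prioBelow prio p).PartiallyWellOrderedOn (PrioEmb prio) := by
  induction p with
  | zero =>
    refine Set.Subsingleton.partiallyWellOrderedOn fun u hu v hv => ?_
    rw [List.eq_nil_iff_forall_not_mem.2 fun c hc => Nat.not_lt_zero _ (hu c hc),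
      List.eq_nil_iff_forall_not_mem.2 fun c hc => Nat.not_lt_zero _ (hv c hc)]
  | succ p ih =>
    have hpref := ih.mono_rel fun _ _ => PrioEmb.prioPrefEmb
    have hblocks : (prioBlocks prio p).PartiallyWellOrderedOn (PrioBlockLE prio) :=
      (Set.toFinite _).partiallyWellOrderedOn.prod hpref
    have hlast : (prioBlocks prio p).PartiallyWellOrderedOn
        fun q q' => q.1 = q'.1 ∧ PrioEmb prio q.2 q'.2 :=
      (Set.toFinite _).partiallyWellOrderedOn.prod ih
    have : IsPreorder (List (α × List α)) (List.SublistForall₂ (PrioBlockLE prio)) := {}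
    have hcodes := hpref.prod ((hblocks.partiallyWellOrderedOn_sublistForall₂ _).prod hlast)
    have hdecoded := hcodes.image_of_monotone_on fun x hx y hy => prioEmb_decodeBlocks hx hy
    exact (ih.union hdecoded).mono (prioBelow_succ_subset p)

theorem PrioEmb.wellQuasiOrdered [Finite α] (prio : α → ℕ) :
    WellQuasiOrdered (PrioEmb prio) := by
  obtain ⟨n, hn⟩ := (Set.finite_range prio).bddAbove
  refine Set.partiallyWellOrderedOn_univ_iff.1 <|
    (partiallyWellOrderedOn_prioBelow prio (n + 1)).mono fun v _ c _ => ?_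
  exact Nat.lt_succ_of_le (hn ⟨c, rfl⟩)

def prioUpClosure (prio : α → ℕ) (T : Set (List α)) : Language α :=
  {v | ∃ u ∈ T, PrioEmb prio u v}

theorem leftQuotient_prioUpClosure (T : Set (List α)) (c : α) :
    (prioUpClosure prio T).leftQuotient [c] =
      prioUpClosure prio
        ({u | c :: u ∈ T} ∪ {u ∈ T | ∃ a u', u = a :: u' ∧ prio c ≤ prio a}) := by
  ext y
  change (∃ u ∈ T, PrioEmb prio u (c :: y)) ↔ ∃ u ∈ _, PrioEmb prio u y
  constructor
  · rintro ⟨u, hu, h⟩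
    rcases PrioEmb.cons_right_iff.1 h with ⟨u', rfl, h'⟩ | ⟨hc, h'⟩
    exacts [⟨u', .inl hu, h'⟩, ⟨u, .inr ⟨hu, hc⟩, h'⟩]
  · rintro ⟨u, hu | ⟨hu, hc⟩, h⟩
    exacts [⟨c :: u, hu, PrioEmb.cons_right_iff.2 (.inl ⟨u, rfl, h⟩)⟩,
      ⟨u, hu, PrioEmb.cons_right_iff.2 (.inr ⟨hc, h⟩)⟩]

theorem isRegular_prioUpClosure [Finite α] {T : Set (List α)} (hT : T.Finite) :
    (prioUpClosure prio T).IsRegular := by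
  obtain ⟨n, hn⟩ := (hT.image List.length).bddAbove
  refine Language.IsRegular.of_mem_of_leftQuotient_mem
    (S := prioUpClosure prio '' 𝒫 {u | u.length ≤ n})
    ((List.finite_length_le α n).powerset.image _) ?_ ⟨T, fun u hu => hn ⟨u, hu, rfl⟩, rfl⟩
  rintro _ ⟨T, hT, rfl⟩ c
  rw [leftQuotient_prioUpClosure]
  refine ⟨_, Set.union_subset (fun u hu => ?_) fun u hu => hT hu.1, rfl⟩
  exact Nat.le_of_succ_le (hT hu)

end

/-- Every priority-downward-closed set of words over a finite priority alphabet
is a regular language. -/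
theorem prio_downward_closed_regular {α : Type*} [Fintype α] (prio : α → ℕ)
    (L : Language α) (hL : ∀ u v : List α, PrioLE prio u v → v ∈ L → u ∈ L) :
    L.IsRegular := by
  obtain ⟨B, hBL, hB, hbasis⟩ :=
    (PrioEmb.wellQuasiOrdered prio).exists_finite_basis (Lᶜ : Set (List α))
  have hcompl : L = (prioUpClosure prio B)ᶜ := by
    ext v
    change v ∈ L ↔ ¬∃ u ∈ B, PrioEmb prio u v
    refine ⟨fun hv ⟨u, hu, huv⟩ => hBL hu (hL u v (.inr huv) hv), fun hv => ?_⟩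
    by_contra hvL
    exact hv (hbasis v hvL)
  exact hcompl ▸ (isRegular_prioUpClosure hB).compl
end

section
/- The block order on words over a finite priority alphabet is a well-quasi-order. -/
/-- Glue together a decomposition into blocks and separator letters:
`glue [(u₀,x₀),…,(u_{n-1},x_{n-1})] u_n = u₀x₀u₁x₁⋯x_{n-1}u_n`. -/
def glue {α : Type*} (ps : List (List α × α)) (last : List α) : List α :=
  (ps.map (fun p => p.1 ++ [p.2])).flatten ++ last

/-- The `i`-th block of a decomposition (`last` for the final index). -/
def blockAt {α : Type*} (ps : List (List α × α)) (last : List α) (i : ℕ) :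
    List α :=
  if h : i < ps.length then (ps.get ⟨i, h⟩).1 else last

/-- The blockSegment `v_i y_i v_{i+1} ⋯ y_{j-1} v_j` of a decomposition. -/
def blockSegment {α : Type*} (ps : List (List α × α)) (last : List α) (i j : ℕ) :
    List α :=
  glue ((ps.take j).drop i) (blockAt ps last j)

/-- The block order at priority level `p`: at level `0` (a single priority) it
is the subword order; at level `p+1`, either both words consist solely of
letters of priority `p+1` and are related by the subword order, or both words
are split at their priority-`p+1` letters into sub-blocks of lower priority and
there is a strictly increasing witness block map `φ` sending the first block to
the first and the last block to the last, such that blocks embed recursively in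
the block order and each separator letter embeds as a subword into the
corresponding blockSegment of the larger word. -/
def BlockLE {α : Type*} (prio : α → ℕ) : ℕ → List α → List α → Prop
  | 0, u, v => u.Sublist v
  | (p+1), u, v =>
      ((∀ a ∈ u, prio a = p + 1) ∧ (∀ a ∈ v, prio a = p + 1) ∧ u.Sublist v) ∨
      ∃ (us : List (List α × α)) (ulast : List α)
        (vs : List (List α × α)) (vlast : List α) (φ : ℕ → ℕ),
        u = glue us ulast ∧ v = glue vs vlast ∧
        (∀ q ∈ us, prio q.2 = p + 1 ∧ ∀ a ∈ q.1, prio a ≤ p) ∧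
        (∀ a ∈ ulast, prio a ≤ p) ∧
        (∀ q ∈ vs, prio q.2 = p + 1 ∧ ∀ a ∈ q.1, prio a ≤ p) ∧
        (∀ a ∈ vlast, prio a ≤ p) ∧
        (∀ i j, i < j → j ≤ us.length → φ i < φ j) ∧
        φ 0 = 0 ∧ φ us.length = vs.length ∧
        (∀ i ≤ us.length,
          BlockLE prio p (blockAt us ulast i) (blockAt vs vlast (φ i))) ∧
        (∀ i (h : i < us.length),
          [(us.get ⟨i, h⟩).2].Sublist (blockSegment vs vlast (φ i) (φ (i + 1))))

/-!
Compare the block order with a finer preorder built from Higman's and Dickson's lemmas. At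
priority `p + 1`, cut a word at its letters of priority `p + 1` into (block, separator) pairs
followed by a last block; relate two words when their last blocks are related at level `p` and
their lists of pairs embed à la Higman with the first pair sent to the first pair, pairs being
related when the separators agree and the blocks are related at level `p`. By induction on `p`
this is a well-quasi-order on the words of priority at most `p`, and the index map of the Higman
embedding, extended by sending the last block to the last block, is a block map `φ` witnessing the
block order.
-/

namespace Set.PartiallyWellOrderedOn

variable {α β : Type*} {r : α → α → Prop} {r' : β → β → Prop} {s : Set α} {t : Set β}

theorem comap (ht : t.PartiallyWellOrderedOn r') (g : α → β) (hg : ∀ a ∈ s, g a ∈ t)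
    (hr : ∀ a ∈ s, ∀ b ∈ s, r' (g a) (g b) → r a b) : s.PartiallyWellOrderedOn r := by
  rw [partiallyWellOrderedOn_iff_exists_lt]
  intro f hf
  obtain ⟨m, n, hmn, h⟩ := ht.exists_lt (f := g ∘ f) fun n => hg _ (hf n)
  exact ⟨m, n, hmn, hr _ (hf m) _ (hf n) h⟩

end Set.PartiallyWellOrderedOn

namespace List

variable {α β : Type*}

theorem wellQuasiOrdered_sublist [Finite α] :
    WellQuasiOrdered (Sublist : List α → List α → Prop) := by
  have hEq : (Set.univ : Set α).PartiallyWellOrderedOn (· = ·) :=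
    Set.finite_univ.partiallyWellOrderedOn
  refine Set.partiallyWellOrderedOn_univ_iff.1 <|
    (hEq.partiallyWellOrderedOn_sublistForall₂ (· = ·)).comap id (by simp) ?_
  intro u _ v _ h
  obtain ⟨w, hw, hwv⟩ := sublistForall₂_iff.1 h
  rw [forall₂_eq_eq_eq] at hw
  subst hw
  exact hwv

def HeadSublistForall₂ (R : α → α → Prop) : List α → List α → Prop
  | [], [] => True
  | a :: l, b :: l' => R a b ∧ SublistForall₂ R l l'
  | _, _ => False

instance {R : α → α → Prop} [IsPreorder α R] : IsPreorder (List α) (HeadSublistForall₂ R) where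
  refl
    | [] => trivial
    | _ :: _ => ⟨refl _, refl _⟩
  trans
    | [], [], [], _, _ => trivial
    | _ :: _, _ :: _, _ :: _, ⟨hab, hl⟩, ⟨hbc, hl'⟩ => ⟨_root_.trans hab hbc, _root_.trans hl hl'⟩

/-- The conditions on the block map `φ` in `BlockLE`, for an arbitrary relation between entries. -/
structure IsIndexMap (R : α → β → Prop) (l₁ : List α) (l₂ : List β) (φ : ℕ → ℕ) : Prop where
  lt : ∀ i j, i < j → j ≤ l₁.length → φ i < φ j
  length : φ l₁.length = l₂.length
  rel : ∀ i (hi : i < l₁.length), ∃ h : φ i < l₂.length, R l₁[i] l₂[φ i]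

namespace IsIndexMap

variable {R : α → β → Prop} {l₁ : List α} {l₂ : List β} {φ : ℕ → ℕ}

theorem cons_right (h : IsIndexMap R l₁ l₂ φ) (b : β) : IsIndexMap R l₁ (b :: l₂) (φ · + 1) where
  lt i j hij hj := Nat.succ_lt_succ (h.lt i j hij hj)
  length := by simp [h.length]
  rel i hi := by
    obtain ⟨hφ, hr⟩ := h.rel i hi
    exact ⟨by simpa using hφ, hr⟩

theorem exists_cons (h : IsIndexMap R l₁ l₂ φ) {a : α} {b : β} (hab : R a b) :
    ∃ ψ, ψ 0 = 0 ∧ IsIndexMap R (a :: l₁) (b :: l₂) ψ := by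
  refine ⟨fun | 0 => 0 | i + 1 => φ i + 1, rfl, ⟨?_, by simp [h.length], ?_⟩⟩
  · rintro (_ | i) (_ | j) hij hj
    · omega
    · simp
    · omega
    · simpa using h.lt i j (by omega) (by simpa using hj)
  · rintro (_ | i) hi
    · exact ⟨by simp, hab⟩
    · obtain ⟨hφ, hr⟩ := h.rel i (by simpa using hi)
      exact ⟨by simpa using hφ, hr⟩

end IsIndexMap

theorem SublistForall₂.exists_isIndexMap {R : α → β → Prop} {l₁ : List α} {l₂ : List β}
    (h : SublistForall₂ R l₁ l₂) : ∃ φ, IsIndexMap R l₁ l₂ φ := by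
  induction h with
  | @nil l => exact ⟨fun _ => l.length, ⟨fun _ _ _ hj => by simp at hj; omega, rfl, by simp⟩⟩
  | cons hab _ ih =>
    obtain ⟨φ, hφ⟩ := ih
    obtain ⟨ψ, -, hψ⟩ := hφ.exists_cons hab
    exact ⟨ψ, hψ⟩
  | cons_right _ ih =>
    obtain ⟨φ, hφ⟩ := ih
    exact ⟨_, hφ.cons_right _⟩

theorem HeadSublistForall₂.exists_isIndexMap {R : α → α → Prop} :
    ∀ {l₁ l₂ : List α}, HeadSublistForall₂ R l₁ l₂ → ∃ φ, φ 0 = 0 ∧ IsIndexMap R l₁ l₂ φ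
  | [], [], _ => ⟨id, rfl, ⟨fun _ _ hij _ => hij, rfl, by simp⟩⟩
  | _ :: _, _ :: _, ⟨hab, h⟩ =>
    let ⟨_, hφ⟩ := h.exists_isIndexMap
    hφ.exists_cons hab

end List

theorem Set.PartiallyWellOrderedOn.partiallyWellOrderedOn_headSublistForall₂ {α : Type*}
    {R : α → α → Prop} [IsPreorder α R] {s : Set α}
    (hs : s.PartiallyWellOrderedOn R) :
    {l : List α | ∀ a ∈ l, a ∈ s}.PartiallyWellOrderedOn (List.HeadSublistForall₂ R) := by
  have hcons : ((fun x : α × List α => x.1 :: x.2) ''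
      (s ×ˢ {l | ∀ a ∈ l, a ∈ s})).PartiallyWellOrderedOn (List.HeadSublistForall₂ R) :=
    (hs.prod (hs.partiallyWellOrderedOn_sublistForall₂ R)).image_of_monotone_on
      fun _ _ _ _ h => h
  refine ((Set.partiallyWellOrderedOn_singleton []).union hcons).mono ?_
  rintro (_ | ⟨a, l⟩) hl
  · exact Or.inl rfl
  · exact Or.inr ⟨(a, l), ⟨hl a List.mem_cons_self, fun b hb => hl b (List.mem_cons_of_mem a hb)⟩,
      rfl⟩

section Decomposition

variable {α : Type*}

theorem glue_nil (last : List α) : glue [] last = last := rfl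

theorem glue_cons (q : List α × α) (ps : List (List α × α)) (last : List α) :
    glue (q :: ps) last = q.1 ++ q.2 :: glue ps last := by
  simp [glue]

theorem blockAt_of_lt {ps : List (List α × α)} {last : List α} {i : ℕ} (h : i < ps.length) :
    blockAt ps last i = ps[i].1 := by
  simp [blockAt, h]

theorem blockAt_length (ps : List (List α × α)) (last : List α) :
    blockAt ps last ps.length = last := by
  simp [blockAt]

theorem singleton_sublist_blockSegment {ps : List (List α × α)} {last : List α} {i j : ℕ}
    (hi : i < ps.length) (hij : i < j) : [ps[i].2].Sublist (blockSegment ps last i j) := by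
  have hlen : i < (ps.take j).length := by simp [hi, hij]
  simp [blockSegment, List.drop_eq_getElem_cons hlen, glue_cons]

/-- The inverse of `glue`, cutting a word at its letters satisfying `P`. -/
def splitBlocks (P : α → Prop) [DecidablePred P] : List α → List (List α × α) × List α
  | [] => ([], [])
  | a :: w =>
    if P a then (([], a) :: (splitBlocks P w).1, (splitBlocks P w).2)
    else match splitBlocks P w with
      | ([], last) => ([], a :: last)
      | (q :: ps, last) => ((a :: q.1, q.2) :: ps, last)

variable {P Q : α → Prop} [DecidablePred P]

theorem glue_splitBlocks (w : List α) : glue (splitBlocks P w).1 (splitBlocks P w).2 = w := by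
  induction w with
  | nil => rfl
  | cons a w ih =>
    by_cases ha : P a
    · simp only [splitBlocks, if_pos ha, glue_cons, ih, List.nil_append]
    · rcases h : splitBlocks P w with ⟨_ | ⟨q, ps⟩, last⟩ <;>
        simp only [h] at ih <;> simp only [splitBlocks, if_neg ha, h, glue_cons, glue_nil] at ih ⊢
      · rw [ih]
      · rw [← ih, List.cons_append]

theorem forall_mem_splitBlocks {w : List α} (hw : ∀ a ∈ w, Q a ∨ P a) :
    (∀ q ∈ (splitBlocks P w).1, P q.2 ∧ ∀ a ∈ q.1, Q a) ∧ ∀ a ∈ (splitBlocks P w).2, Q a := by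
  induction w with
  | nil => simp [splitBlocks]
  | cons a w ih =>
    obtain ⟨hblocks, hlast⟩ := ih fun b hb => hw b (List.mem_cons_of_mem a hb)
    by_cases ha : P a
    · simp only [splitBlocks, if_pos ha, List.forall_mem_cons]
      exact ⟨⟨⟨ha, by simp⟩, hblocks⟩, hlast⟩
    · have hQa : Q a := (hw a List.mem_cons_self).resolve_right ha
      rcases h : splitBlocks P w with ⟨_ | ⟨q, ps⟩, last⟩ <;>
        simp only [h] at hblocks hlast <;>
        simp only [splitBlocks, if_neg ha, h, List.forall_mem_cons] at hblocks ⊢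
      · exact ⟨by simp, hQa, hlast⟩
      · exact ⟨⟨⟨hblocks.1.1, hQa, hblocks.1.2⟩, hblocks.2⟩, hlast⟩

end Decomposition

section LiftRel

variable {α : Type*} {P Q : α → Prop} [DecidablePred P] {r : List α → List α → Prop}

def BlockSepRel (r : List α → List α → Prop) (q q' : List α × α) : Prop :=
  r q.1 q'.1 ∧ q.2 = q'.2

instance [IsPreorder (List α) r] : IsPreorder (List α × α) (BlockSepRel r) where
  refl _ := ⟨refl _, rfl⟩
  trans _ _ _ h h' := ⟨_root_.trans h.1 h'.1, h.2.trans h'.2⟩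

def LiftRel (P : α → Prop) [DecidablePred P] (r : List α → List α → Prop) (u v : List α) :
    Prop :=
  r (splitBlocks P u).2 (splitBlocks P v).2 ∧
    List.HeadSublistForall₂ (BlockSepRel r) (splitBlocks P u).1 (splitBlocks P v).1

instance [IsPreorder (List α) r] : IsPreorder (List α) (LiftRel P r) where
  refl _ := ⟨refl _, refl _⟩
  trans _ _ _ h h' := ⟨_root_.trans h.1 h'.1, _root_.trans h.2 h'.2⟩

theorem partiallyWellOrderedOn_liftRel [Finite α] [IsPreorder (List α) r]
    (h : {w | ∀ a ∈ w, Q a}.PartiallyWellOrderedOn r) :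
    {w | ∀ a ∈ w, Q a ∨ P a}.PartiallyWellOrderedOn (LiftRel P r) := by
  have hletters : (Set.univ : Set α).PartiallyWellOrderedOn (· = ·) :=
    Set.finite_univ.partiallyWellOrderedOn
  have hpairs : (_ ×ˢ Set.univ).PartiallyWellOrderedOn (BlockSepRel r) := h.prod hletters
  refine (h.prod hpairs.partiallyWellOrderedOn_headSublistForall₂).comap
    (fun w => ((splitBlocks P w).2, (splitBlocks P w).1)) (fun w hw => ?_) fun _ _ _ _ hr => hr
  obtain ⟨hblocks, hlast⟩ := forall_mem_splitBlocks hw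
  exact ⟨hlast, fun q hq => ⟨(hblocks q hq).2, trivial⟩⟩

end LiftRel

section BlockLE

variable {α : Type*}

theorem BlockLE.succ_of_liftRel {prio : α → ℕ} {p : ℕ} {r : List α → List α → Prop}
    (hr : ∀ u v, (∀ a ∈ u, prio a ≤ p) → (∀ a ∈ v, prio a ≤ p) → r u v → BlockLE prio p u v)
    {u v : List α} (hu : ∀ a ∈ u, prio a ≤ p + 1) (hv : ∀ a ∈ v, prio a ≤ p + 1)
    (h : LiftRel (prio · = p + 1) r u v) : BlockLE prio (p + 1) u v := by
  obtain ⟨hlast, hpairs⟩ := h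
  obtain ⟨φ, hφ0, hφ⟩ := hpairs.exists_isIndexMap
  obtain ⟨hu_blocks, hu_last⟩ :=
    forall_mem_splitBlocks (Q := (prio · ≤ p)) fun a ha => Nat.le_succ_iff.1 (hu a ha)
  obtain ⟨hv_blocks, hv_last⟩ :=
    forall_mem_splitBlocks (Q := (prio · ≤ p)) fun a ha => Nat.le_succ_iff.1 (hv a ha)
  refine Or.inr ⟨_, _, _, _, φ, (glue_splitBlocks u).symm, (glue_splitBlocks v).symm, hu_blocks,
    hu_last, hv_blocks, hv_last, hφ.lt, hφ0, hφ.length, fun i hi => ?_, fun i hi => ?_⟩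
  · rcases hi.lt_or_eq with hi | rfl
    · obtain ⟨hφi, hrel, -⟩ := hφ.rel i hi
      rw [blockAt_of_lt hi, blockAt_of_lt hφi]
      exact hr _ _ (hu_blocks _ (List.getElem_mem hi)).2 (hv_blocks _ (List.getElem_mem hφi)).2
        hrel
    · rw [hφ.length, blockAt_length, blockAt_length]
      exact hr _ _ hu_last hv_last hlast
  · obtain ⟨hφi, -, hsep⟩ := hφ.rel i hi
    rw [List.get_eq_getElem, hsep]
    exact singleton_sublist_blockSegment hφi (hφ.lt i (i + 1) (Nat.lt_succ_self i) hi)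

theorem exists_wqo_le_blockLE [Finite α] (prio : α → ℕ) (p : ℕ) :
    ∃ r : List α → List α → Prop, IsPreorder (List α) r ∧
      {w | ∀ a ∈ w, prio a ≤ p}.PartiallyWellOrderedOn r ∧
      ∀ u v, (∀ a ∈ u, prio a ≤ p) → (∀ a ∈ v, prio a ≤ p) → r u v → BlockLE prio p u v := by
  induction p with
  | zero =>
    exact ⟨List.Sublist, { refl := List.Sublist.refl, trans := fun _ _ _ => List.Sublist.trans },
      Set.partiallyWellOrderedOn_of_wellQuasiOrdered List.wellQuasiOrdered_sublist _,
      fun _ _ _ _ h => h⟩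
  | succ p ih =>
    obtain ⟨r, _, hpwo, hle⟩ := ih
    exact ⟨LiftRel (prio · = p + 1) r, inferInstance,
      (partiallyWellOrderedOn_liftRel hpwo).mono fun w hw a ha => Nat.le_succ_iff.1 (hw a ha),
      fun _ _ hu hv => BlockLE.succ_of_liftRel hle hu hv⟩

theorem partiallyWellOrderedOn_blockLE [Finite α] (prio : α → ℕ) (p : ℕ) :
    {w | ∀ a ∈ w, prio a ≤ p}.PartiallyWellOrderedOn (BlockLE prio p) := by
  obtain ⟨r, -, hpwo, hle⟩ := exists_wqo_le_blockLE prio p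
  exact hpwo.comap id (fun _ hw => hw) fun u hu v hv => hle u v hu hv

end BlockLE

/-- The block order on words over a finite priority alphabet is a
well-quasi-order. -/
theorem blockLE_wqo {α : Type*} [Finite α] (prio : α → ℕ) (d : ℕ)
    (hd : ∀ a : α, prio a ≤ d) (f : ℕ → List α) :
    ∃ i j : ℕ, i < j ∧ BlockLE prio d (f i) (f j) :=
  (partiallyWellOrderedOn_blockLE prio d).exists_lt fun _ a _ => hd a
end
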